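/- Let a > 0, λ > 0, C ≥ 0, T_0 < 0, and let f : [T_0, 0) → [0, ∞) be bounded and C¹ with f'(t) ≥ (a/|t|) f(t) - C |t|^{λ - 1} f(t) for all t ∈ [T_0, 0). Then f(t) = 0 for all t ∈ [T_0, 0). -/

import Mathlib

/-!
The weight `E t = |t| ^ a * exp (-(C / λ) * |t| ^ λ)` solves `E' = -(a / |t| - C |t| ^ (λ - 1)) E`
on `t < 0`, so the differential inequality says exactly that `f * E` is nondecreasing. As `t → 0⁻`,
`E t → 0` while `f` stays bounded, hence `f * E → 0`; a nonnegative nondecreasing function with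
limit `0` vanishes, and `E > 0` gives `f = 0`.
-/

open Set Filter Real Topology

theorem MonotoneOn.le_of_tendsto_nhdsLT {α β : Type*} [LinearOrder α] [TopologicalSpace α]
    [OrderTopology α] [DenselyOrdered α] [Preorder β] [TopologicalSpace β] [ClosedIciTopology β]
    {g : α → β} {b c : α} {L : β} (hg : MonotoneOn g (Ico b c))
    (hlim : Tendsto g (𝓝[<] c) (𝓝 L)) {t : α} (ht : t ∈ Ico b c) : g t ≤ L :=
  have := nhdsLT_neBot_of_exists_lt ⟨t, ht.2⟩
  ge_of_tendsto hlim <| mem_of_superset (Ioo_mem_nhdsLT ht.2) fun _ hs =>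
    hg ht ⟨ht.1.trans hs.1.le, hs.2⟩ hs.1.le

theorem monotoneOn_mul_of_hasDerivAt_of_mul_le {s : Set ℝ} (hs : Convex ℝ s)
    {f f' E p : ℝ → ℝ} (hf : ∀ t ∈ s, HasDerivAt f (f' t) t)
    (hE : ∀ t ∈ s, HasDerivAt E (-(p t * E t)) t) (hE₀ : ∀ t ∈ s, 0 ≤ E t)
    (hfp : ∀ t ∈ s, p t * f t ≤ f' t) : MonotoneOn (fun t => f t * E t) s := by
  have hderiv : ∀ t ∈ s, HasDerivAt (fun t => f t * E t) (E t * (f' t - p t * f t)) t :=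
    fun t ht => ((hf t ht).mul (hE t ht)).congr_deriv (by ring)
  refine monotoneOn_of_hasDerivWithinAt_nonneg hs
    (fun t ht => (hderiv t ht).continuousAt.continuousWithinAt)
    (fun t ht => (hderiv t (interior_subset ht)).hasDerivWithinAt) fun t ht => ?_
  have ht := interior_subset ht
  exact mul_nonneg (hE₀ t ht) (sub_nonneg.2 (hfp t ht))

/-- The integrating factor, written with `-t` for `|t|` since it is only used for `t < 0`. -/
noncomputable def integratingFactor (a C lam t : ℝ) : ℝ :=
  (-t) ^ a * exp (-(C / lam) * (-t) ^ lam)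

section integratingFactor

variable {a C lam t : ℝ}

theorem integratingFactor_pos (ht : t < 0) : 0 < integratingFactor a C lam t :=
  mul_pos (rpow_pos_of_pos (neg_pos.2 ht) a) (exp_pos _)

theorem hasDerivAt_integratingFactor (hlam : lam ≠ 0) (ht : t < 0) :
    HasDerivAt (integratingFactor a C lam)
      (-((a / |t| - C * |t| ^ (lam - 1)) * integratingFactor a C lam t)) t := by
  have hnt : 0 < -t := neg_pos.2 ht
  have hpow (q : ℝ) : HasDerivAt (fun t : ℝ => (-t) ^ q) (-(q * (-t) ^ (q - 1))) t := by
    simpa [Function.comp_def] using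
      (hasDerivAt_rpow_const (Or.inl hnt.ne')).comp t (hasDerivAt_neg t)
  unfold integratingFactor
  refine ((hpow a).mul ((hpow lam).const_mul (-(C / lam))).exp).congr_deriv ?_
  rw [abs_of_neg ht, rpow_sub_one hnt.ne', rpow_sub_one hnt.ne']
  field_simp
  ring

theorem tendsto_integratingFactor_nhdsLT_zero (ha : 0 < a) (hlam : 0 ≤ lam) :
    Tendsto (integratingFactor a C lam) (𝓝[<] 0) (𝓝 0) := by
  have hcont : ContinuousAt (integratingFactor a C lam) 0 :=
    ((continuousAt_rpow_const _ a (Or.inr ha.le)).comp continuousAt_neg).mul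
      (((continuousAt_rpow_const _ lam (Or.inr hlam)).comp continuousAt_neg).const_mul _).rexp
  simpa [integratingFactor, zero_rpow ha.ne'] using hcont.tendsto.mono_left nhdsWithin_le_nhds

end integratingFactor

theorem uniqueness_differential_inequality_general (a lam C T0 : ℝ) (ha : 0 < a) (hlam : 0 < lam)
    (f D : ℝ → ℝ)
    (hfpos : ∀ t ∈ Ico T0 (0 : ℝ), 0 ≤ f t)
    (hfbdd : ∃ M, ∀ t ∈ Ico T0 (0 : ℝ), f t ≤ M)
    (hD : ∀ t ∈ Ico T0 (0 : ℝ), HasDerivAt f (D t) t)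
    (hineq : ∀ t ∈ Ico T0 (0 : ℝ), D t ≥ a / |t| * f t - C * |t| ^ (lam - 1) * f t) :
    ∀ t ∈ Ico T0 (0 : ℝ), f t = 0 := by
  intro t ht
  obtain ⟨M, hM⟩ := hfbdd
  have hmono : MonotoneOn (fun s => f s * integratingFactor a C lam s) (Ico T0 0) :=
    monotoneOn_mul_of_hasDerivAt_of_mul_le (convex_Ico T0 0) hD
      (fun s hs => hasDerivAt_integratingFactor hlam.ne' hs.2)
      (fun s hs => (integratingFactor_pos hs.2).le)
      (fun s hs => by linarith [hineq s hs])
  have hbdd : IsBoundedUnder (· ≤ ·) (𝓝[<] 0) (norm ∘ f) :=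
    isBoundedUnder_of_eventually_le (a := M) <|
      mem_of_superset (Ioo_mem_nhdsLT (ht.1.trans_lt ht.2)) fun s hs => by
        have hs : s ∈ Ico T0 0 := Ioo_subset_Ico_self hs
        simpa [abs_of_nonneg (hfpos s hs)] using hM s hs
  have hle : f t * integratingFactor a C lam t ≤ 0 :=
    hmono.le_of_tendsto_nhdsLT (isBoundedUnder_le_mul_tendsto_zero hbdd
      (tendsto_integratingFactor_nhdsLT_zero ha hlam.le)) ht
  exact le_antisymm (nonpos_of_mul_nonpos_left hle (integratingFactor_pos ht.2)) (hfpos t ht)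

theorem uniqueness_differential_inequality (a lam C T0 : ℝ) (ha : 0 < a) (hlam : 0 < lam)
    (hC : 0 ≤ C) (hT0 : T0 < 0) (f D : ℝ → ℝ)
    (hfpos : ∀ t ∈ Ico T0 (0 : ℝ), 0 ≤ f t)
    (hfbdd : ∃ M, ∀ t ∈ Ico T0 (0 : ℝ), f t ≤ M)
    (hD : ∀ t ∈ Ico T0 (0 : ℝ), HasDerivAt f (D t) t)
    (hDcont : ContinuousOn D (Ico T0 0))
    (hineq : ∀ t ∈ Ico T0 (0 : ℝ), D t ≥ a / |t| * f t - C * |t| ^ (lam - 1) * f t) :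
    ∀ t ∈ Ico T0 (0 : ℝ), f t = 0 :=
  uniqueness_differential_inequality_general a lam C T0 ha hlam f D hfpos hfbdd hD hineq
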